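/- arXiv:2604.19094 — 2 statements merged into one kernel-verified Lean document; each statement's English description precedes it below -/
import Mathlib

section
/- Let a, b, g', k be positive integers. Suppose there exists a tree T with a vertex v such that a(T,v) = a and b(T,v) = b, and there exists a tree T' with a vertex v' such that a(T',v') = g' and b(T',v') = k·g'. Then there exists a tree T₀ with a vertex w such that a(T₀,w) = k·g'²·b and b(T₀,w) = k·g'²·(a + k·b). -/
/-- The number of independent sets of `G` containing the vertex `v`. -/
noncomputable def aCount {V : Type*} (G : SimpleGraph V) (v : V) : ℕ :=
  Nat.card {s : Set V // v ∈ s ∧ ∀ x ∈ s, ∀ y ∈ s, ¬ G.Adj x y}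

/-- The number of independent sets of `G` not containing the vertex `v`
(including the empty set). -/
noncomputable def bCount {V : Type*} (G : SimpleGraph V) (v : V) : ℕ :=
  Nat.card {s : Set V // v ∉ s ∧ ∀ x ∈ s, ∀ y ∈ s, ¬ G.Adj x y}


/-!
Two operations on rooted trees act on the pair `(a, b)` in a controlled way: identifying the
roots of two trees multiplies the pairs componentwise, and hanging a tree from a new root by a
pendant edge sends `(a, b)` to `(b, a + b)`. Gluing `T'` onto `T`, adding a pendant root, and
gluing a second copy of `T'` at that root therefore yields
`(a, b) ↦ (a g', k b g') ↦ (k b g', a g' + k b g') ↦ (k g'² b, k g'² (a + k b))`.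
Both operations preserve trees: the result is connected and still has one edge fewer than
vertices.
-/

theorem Nat.card_subtype_ne {α : Type*} [Finite α] (a : α) :
    Nat.card {x // x ≠ a} = Nat.card α - 1 := by
  classical
  have := Fintype.ofFinite α
  simp [Nat.card_eq_fintype_card, Fintype.card_subtype_compl]

open Function

namespace SimpleGraph

variable {V W : Type*}

section IndepSet

variable {G : SimpleGraph V} {s : Set V}

theorem isIndepSet_iff_forall_not_adj :
    G.IsIndepSet s ↔ ∀ x ∈ s, ∀ y ∈ s, ¬ G.Adj x y :=
  ⟨fun h _ hx _ hy hxy => h hx hy hxy.ne hxy, fun h x hx y hy _ => h x hx y hy⟩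

theorem isIndepSet_sup {H : SimpleGraph V} :
    (G ⊔ H).IsIndepSet s ↔ G.IsIndepSet s ∧ H.IsIndepSet s := by
  simp only [IsIndepSet, Set.Pairwise, sup_adj, not_or, imp_and, forall_and]

theorem isIndepSet_map (f : V ↪ W) {s : Set W} :
    (G.map f).IsIndepSet s ↔ G.IsIndepSet (f ⁻¹' s) := by
  simp only [isIndepSet_iff_forall_not_adj, map_adj, Set.mem_preimage]
  aesop

theorem isIndepSet_edge {u w : V} (h : u ≠ w) :
    (edge u w).IsIndepSet s ↔ ¬(u ∈ s ∧ w ∈ s) := by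
  simp only [isIndepSet_iff_forall_not_adj, edge_adj]
  constructor
  · rintro hs ⟨hu, hw⟩
    exact hs u hu w hw ⟨Or.inl ⟨rfl, rfl⟩, h⟩
  · rintro hs x hx y hy ⟨⟨rfl, rfl⟩ | ⟨rfl, rfl⟩, -⟩
    exacts [hs ⟨hx, hy⟩, hs ⟨hy, hx⟩]

theorem Iso.isIndepSet_image {H : SimpleGraph W} (e : G ≃g H) :
    H.IsIndepSet (e '' s) ↔ G.IsIndepSet s := by
  rw [IsIndepSet, e.injective.injOn.pairwise_image]
  simp only [Set.Pairwise, onFun_apply, e.map_adj_iff]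

end IndepSet

/-- `aCount` and `bCount` are the cases `p = True` and `p = False`; keeping `p` as a parameter
lets one bijection handle both counts of a glued tree. -/
noncomputable def indepCount (G : SimpleGraph V) (v : V) (p : Prop) : ℕ :=
  Nat.card {s : Set V // (v ∈ s ↔ p) ∧ G.IsIndepSet s}

theorem aCount_eq_indepCount (G : SimpleGraph V) (v : V) : aCount G v = indepCount G v True :=
  Nat.card_congr <| Equiv.subtypeEquivRight fun _ => by
    rw [iff_true, isIndepSet_iff_forall_not_adj]

theorem bCount_eq_indepCount (G : SimpleGraph V) (v : V) : bCount G v = indepCount G v False :=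
  Nat.card_congr <| Equiv.subtypeEquivRight fun _ => by
    rw [iff_false, isIndepSet_iff_forall_not_adj]

theorem Iso.indepCount_eq {G : SimpleGraph V} {H : SimpleGraph W} (e : G ≃g H) (v : V)
    (p : Prop) : indepCount H (e v) p = indepCount G v p :=
  Nat.card_congr <| ((Equiv.Set.congr e.toEquiv).subtypeEquiv fun _ =>
    and_congr (iff_congr e.injective.mem_set_image.symm .rfl) e.isIndepSet_image.symm).symm

theorem IsTree.exists_fin_indepCount_eq [Fintype V] {G : SimpleGraph V} (hG : G.IsTree) (v : V) :
    ∃ (n : ℕ) (T : SimpleGraph (Fin n)) (w : Fin n),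
      T.IsTree ∧ ∀ p, indepCount T w p = indepCount G v p :=
  ⟨_, G.overFin rfl, G.overFinIso rfl v, (G.overFinIso rfl).isTree_iff.1 hG,
    (G.overFinIso rfl).indepCount_eq v⟩

theorem indepCount_true_add_false [Finite V] (G : SimpleGraph V) (v : V) :
    indepCount G v True + indepCount G v False = Nat.card {s : Set V // G.IsIndepSet s} := by
  classical
  rw [indepCount, indepCount, ← Nat.card_sum]
  refine Nat.card_congr <| .trans (.sumCongr ?_ ?_)
    (Equiv.sumCompl fun s : {s : Set V // G.IsIndepSet s} => v ∈ s.1)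
  · exact .trans (.subtypeEquivRight fun _ => by rw [iff_true, and_comm])
      (Equiv.subtypeSubtypeEquivSubtypeInter G.IsIndepSet (v ∈ ·)).symm
  · exact .trans (.subtypeEquivRight fun _ => by rw [iff_false, and_comm])
      (Equiv.subtypeSubtypeEquivSubtypeInter G.IsIndepSet (v ∉ ·)).symm

theorem ncard_edgeSet_map (f : V ↪ W) (G : SimpleGraph V) :
    (G.map f).edgeSet.ncard = G.edgeSet.ncard := by
  rw [edgeSet_map, Set.ncard_image_of_injective _ f.sym2Map.injective]

section Glue

variable {V₁ V₂ : Type*} [DecidableEq V₂]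
  (G₁ : SimpleGraph V₁) (v₁ : V₁) (G₂ : SimpleGraph V₂) (v₂ : V₂)

def glueEmb : V₂ ↪ V₁ ⊕ {x : V₂ // x ≠ v₂} where
  toFun x := if h : x = v₂ then .inl v₁ else .inr ⟨x, h⟩
  inj' x y := by
    dsimp only
    split_ifs <;> simp_all

theorem glueEmb_apply (x : V₂) :
    glueEmb v₁ v₂ x = if h : x = v₂ then .inl v₁ else .inr ⟨x, h⟩ :=
  rfl

@[simp] theorem glueEmb_self : glueEmb v₁ v₂ v₂ = .inl v₁ := dif_pos rfl

@[simp] theorem glueEmb_coe (x : {x : V₂ // x ≠ v₂}) : glueEmb v₁ v₂ x = .inr x := dif_neg x.2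

theorem glueEmb_eq_inl {x : V₂} {a : V₁} : glueEmb v₁ v₂ x = .inl a ↔ x = v₂ ∧ v₁ = a := by
  rw [glueEmb_apply]
  split_ifs <;> simp_all

def glue : SimpleGraph (V₁ ⊕ {x : V₂ // x ≠ v₂}) :=
  G₁.map Embedding.inl ⊔ G₂.map (glueEmb v₁ v₂)

variable {G₁ v₁ G₂ v₂}

theorem isIndepSet_glue {s : Set (V₁ ⊕ {x : V₂ // x ≠ v₂})} :
    (glue G₁ v₁ G₂ v₂).IsIndepSet s ↔
      G₁.IsIndepSet (Sum.inl ⁻¹' s) ∧ G₂.IsIndepSet (glueEmb v₁ v₂ ⁻¹' s) :=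
  isIndepSet_sup.trans (and_congr (isIndepSet_map _) (isIndepSet_map _))

theorem preimage_glueEmb_elim {s₁ : Set V₁} {s₂ : Set V₂} (h : v₁ ∈ s₁ ↔ v₂ ∈ s₂) :
    glueEmb v₁ v₂ ⁻¹' {z | z.elim (· ∈ s₁) (↑· ∈ s₂)} = s₂ := by
  ext x
  by_cases hx : x = v₂
  · subst hx
    simpa using h
  · simp [glueEmb_apply, hx]

variable (G₁ v₁ G₂ v₂) in
def glueIndepEquiv (p : Prop) :
    {s : Set (V₁ ⊕ {x : V₂ // x ≠ v₂}) // (.inl v₁ ∈ s ↔ p) ∧ (glue G₁ v₁ G₂ v₂).IsIndepSet s} ≃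
      {s₁ : Set V₁ // (v₁ ∈ s₁ ↔ p) ∧ G₁.IsIndepSet s₁} ×
        {s₂ : Set V₂ // (v₂ ∈ s₂ ↔ p) ∧ G₂.IsIndepSet s₂} where
  toFun s :=
    (⟨Sum.inl ⁻¹' s.1, s.2.1, (isIndepSet_glue.1 s.2.2).1⟩,
      ⟨glueEmb v₁ v₂ ⁻¹' s.1, by simpa using s.2.1, (isIndepSet_glue.1 s.2.2).2⟩)
  invFun t :=
    have h := t.1.2.1.trans t.2.2.1.symm
    ⟨{z | z.elim (· ∈ t.1.1) (↑· ∈ t.2.1)}, t.1.2.1,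
      isIndepSet_glue.2 ⟨t.1.2.2, by rw [preimage_glueEmb_elim h]; exact t.2.2.2⟩⟩
  left_inv s := by
    ext (x | x) <;> simp
  right_inv t := by
    ext x
    · rfl
    · simp only [preimage_glueEmb_elim (t.1.2.1.trans t.2.2.1.symm)]

theorem indepCount_glue (p : Prop) :
    indepCount (glue G₁ v₁ G₂ v₂) (.inl v₁) p = indepCount G₁ v₁ p * indepCount G₂ v₂ p := by
  rw [indepCount, Nat.card_congr (glueIndepEquiv G₁ v₁ G₂ v₂ p), Nat.card_prod]
  rfl

theorem Connected.glue (h₁ : G₁.Connected) (h₂ : G₂.Connected) :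
    (glue G₁ v₁ G₂ v₂).Connected := by
  refine (connected_iff_exists_forall_reachable _).2 ⟨.inl v₁, ?_⟩
  rintro (x | x)
  · exact (h₁.preconnected v₁ x).map ((Hom.ofLE le_sup_left).comp (Embedding.map _ G₁).toHom)
  · rw [← glueEmb_self v₁ v₂, ← glueEmb_coe v₁ v₂ x]
    exact (h₂.preconnected v₂ x).map
      ((Hom.ofLE le_sup_right).comp (Embedding.map (glueEmb v₁ v₂) G₂).toHom)

theorem disjoint_edgeSet_glue :
    Disjoint (G₁.map Embedding.inl).edgeSet (G₂.map (glueEmb v₁ v₂)).edgeSet := by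
  rw [Set.disjoint_left]
  intro e h₁ h₂
  induction e using Sym2.ind with | _ x y => ?_
  rw [mem_edgeSet, map_adj] at h₁ h₂
  obtain ⟨a, b, -, rfl, rfl⟩ := h₁
  obtain ⟨c, d, hcd, hc, hd⟩ := h₂
  simp only [Embedding.inl_apply, glueEmb_eq_inl] at hc hd
  exact G₂.irrefl (hc.1 ▸ hd.1 ▸ hcd)

theorem IsTree.glue [Finite V₁] [Finite V₂] (h₁ : G₁.IsTree) (h₂ : G₂.IsTree) :
    (glue G₁ v₁ G₂ v₂).IsTree := by
  rw [isTree_iff_connected_and_card] at *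
  refine ⟨h₁.1.glue h₂.1, ?_⟩
  rw [Nat.card_coe_set_eq, SimpleGraph.glue, edgeSet_sup, Set.ncard_union_eq disjoint_edgeSet_glue,
    ncard_edgeSet_map, ncard_edgeSet_map, Nat.card_sum, Nat.card_subtype_ne]
  rw [Nat.card_coe_set_eq] at h₁ h₂
  omega

end Glue

section Pend

variable (G : SimpleGraph V) (v : V)

def pend : SimpleGraph (Option V) :=
  G.map Embedding.some ⊔ edge none (some v)

variable {G v}

theorem isIndepSet_pend {s : Set (Option V)} :
    (pend G v).IsIndepSet s ↔ G.IsIndepSet (some ⁻¹' s) ∧ ¬(none ∈ s ∧ some v ∈ s) :=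
  isIndepSet_sup.trans (and_congr (isIndepSet_map _) (isIndepSet_edge (Option.some_ne_none v).symm))

variable (G v) in
def pendIndepEquiv (p : Prop) :
    {s : Set (Option V) // (none ∈ s ↔ p) ∧ (pend G v).IsIndepSet s} ≃
      {t : Set V // (p → v ∉ t) ∧ G.IsIndepSet t} where
  toFun s :=
    ⟨some ⁻¹' s.1, fun hp hv => (isIndepSet_pend.1 s.2.2).2 ⟨s.2.1.2 hp, hv⟩,
      (isIndepSet_pend.1 s.2.2).1⟩
  invFun t := ⟨{z | z.elim p (· ∈ t.1)}, .rfl, isIndepSet_pend.2 ⟨t.2.2, fun h => t.2.1 h.1 h.2⟩⟩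
  left_inv s := by
    ext (_ | x)
    exacts [s.2.1.symm, .rfl]
  right_inv _ := rfl

theorem indepCount_pend_true : indepCount (pend G v) none True = indepCount G v False := by
  rw [indepCount, Nat.card_congr (pendIndepEquiv G v True)]
  exact Nat.card_congr <| .subtypeEquivRight fun _ => by rw [true_implies, iff_false]

theorem indepCount_pend_false [Finite V] :
    indepCount (pend G v) none False = indepCount G v True + indepCount G v False := by
  rw [indepCount, Nat.card_congr (pendIndepEquiv G v False), indepCount_true_add_false]
  exact Nat.card_congr <| .subtypeEquivRight fun _ => by rw [false_implies, true_and]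

theorem Connected.pend (h : G.Connected) : (pend G v).Connected := by
  refine (connected_iff_exists_forall_reachable _).2 ⟨some v, ?_⟩
  rintro (_ | x)
  · exact (Adj.reachable (by simp [SimpleGraph.pend, edge_adj])).symm
  · exact (h.preconnected v x).map ((Hom.ofLE le_sup_left).comp (Embedding.map _ G).toHom)

theorem IsTree.pend [Finite V] (h : G.IsTree) : (pend G v).IsTree := by
  rw [isTree_iff_connected_and_card] at *
  refine ⟨h.1.pend, ?_⟩
  have hdisj : Disjoint (G.map Embedding.some).edgeSet (edge none (some v)).edgeSet := by
    rw [edgeSet_edge_of_ne (Option.some_ne_none v).symm, Set.disjoint_singleton_right,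
      mem_edgeSet, map_adj]
    rintro ⟨a, b, -, h, -⟩
    exact Option.some_ne_none a h
  rw [Nat.card_coe_set_eq, SimpleGraph.pend, edgeSet_sup, Set.ncard_union_eq hdisj,
    ncard_edgeSet_map, edgeSet_edge_of_ne (Option.some_ne_none v).symm, Set.ncard_singleton,
    Finite.card_option, ← h.2, Nat.card_coe_set_eq]

end Pend

end SimpleGraph

theorem marked_tree_combination_general (a b g' k : ℕ)
    (h₁ : ∃ (n : ℕ) (T : SimpleGraph (Fin n)) (v : Fin n),
      T.IsTree ∧ aCount T v = a ∧ bCount T v = b)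
    (h₂ : ∃ (n : ℕ) (T' : SimpleGraph (Fin n)) (v' : Fin n),
      T'.IsTree ∧ aCount T' v' = g' ∧ bCount T' v' = k * g') :
    ∃ (n : ℕ) (T₀ : SimpleGraph (Fin n)) (w : Fin n),
      T₀.IsTree ∧ aCount T₀ w = k * g' ^ 2 * b ∧
        bCount T₀ w = k * g' ^ 2 * (a + k * b) := by
  obtain ⟨n₁, T, v, hT, rfl, rfl⟩ := h₁
  obtain ⟨n₂, T', v', hT', hg', hkg'⟩ := h₂
  rw [SimpleGraph.aCount_eq_indepCount] at hg'
  rw [SimpleGraph.bCount_eq_indepCount] at hkg'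
  have hT₀ : (((T.glue v T' v').pend (.inl v)).glue none T' v').IsTree :=
    (hT.glue hT').pend.glue hT'
  obtain ⟨n, T₀, w, hT₀, hcount⟩ := hT₀.exists_fin_indepCount_eq (.inl none)
  refine ⟨n, T₀, w, hT₀, ?_, ?_⟩ <;>
    simp only [SimpleGraph.aCount_eq_indepCount, SimpleGraph.bCount_eq_indepCount, hcount,
      SimpleGraph.indepCount_glue, SimpleGraph.indepCount_pend_true,
      SimpleGraph.indepCount_pend_false, hg', hkg'] <;>
    ring

/-- If some marked tree realizes the pair `(a, b)` and some marked tree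
realizes `(g', k·g')`, then some marked tree realizes
`(k·g'²·b, k·g'²·(a + k·b))`. -/
theorem marked_tree_combination (a b g' k : ℕ)
    (ha : 0 < a) (hb : 0 < b) (hg' : 0 < g') (hk : 0 < k)
    (h₁ : ∃ (n : ℕ) (T : SimpleGraph (Fin n)) (v : Fin n),
      T.IsTree ∧ aCount T v = a ∧ bCount T v = b)
    (h₂ : ∃ (n : ℕ) (T' : SimpleGraph (Fin n)) (v' : Fin n),
      T'.IsTree ∧ aCount T' v' = g' ∧ bCount T' v' = k * g') :
    ∃ (n : ℕ) (T₀ : SimpleGraph (Fin n)) (w : Fin n),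
      T₀.IsTree ∧ aCount T₀ w = k * g' ^ 2 * b ∧
        bCount T₀ w = k * g' ^ 2 * (a + k * b) :=
  marked_tree_combination_general a b g' k h₁ h₂
end

section
/- Let A be a positive integer and let q ∈ Q_A with q ≥ 2. Then there exists a finite connected simple graph G such that i(G) = q and 2·|E(G)| ≤ (A+1)·|V(G)|, i.e., the average degree of G is at most A+1. -/
/-- The number of independent sets of a simple graph `G`
(including the empty set). -/
noncomputable def numIndep {V : Type*} (G : SimpleGraph V) : ℕ :=
  Nat.card {s : Set V // ∀ x ∈ s, ∀ y ∈ s, ¬ G.Adj x y}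

/-- The continued fraction `[a₁,…,a_ℓ] = 1/(a₁+1/(a₂+⋯+1/a_ℓ))`. -/
def contFrac : List ℕ → ℚ
  | [] => 0
  | a :: rest => 1 / ((a : ℚ) + contFrac rest)

/-- `QSet A` is the set of positive integers `q` such that `q = 1` or there is
`1 ≤ p < q` coprime to `q` with `p/q = [a₁,…,a_ℓ]` for some `a₁,…,a_ℓ ≤ A`. -/
def QSet (A : ℕ) : Set ℕ :=
  {q | q = 1 ∨ ∃ p : ℕ, 1 ≤ p ∧ p < q ∧ Nat.gcd p q = 1 ∧
    ∃ L : List ℕ, L ≠ [] ∧ (∀ a ∈ L, 1 ≤ a ∧ a ≤ A) ∧ contFrac L = (p : ℚ) / q}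

/-!
Write `p / q = [a₁, …, a_ℓ]` in lowest terms, so that `q` is the continuant `K(a₁, …, a_ℓ)` and
`p = K(a₂, …, a_ℓ)`. Graphs are built from the back of the list, each carrying a set `P` of
vertices. Start with the clique on `a_ℓ - 1` vertices and `P` everything. To process `a`, add a
new clique on `a` vertices, join one of them to all of `P`, and make the new clique the new `P`.
If the old graph has `x` independent sets, `y` of them avoiding `P`, the new one has `a x + y`
independent sets, `x` of them avoiding the new `P`: this is the continuant recursion. The step
adds `a` vertices and `a (a - 1) / 2 + |P|` edges, so `2 |E| + 2 |P| ≤ (A + 1) |V|` is preserved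
as long as `a ≤ A`.
-/

/-- `continuant [a₁, …, a_ℓ]` is the denominator of `[a₁, …, a_ℓ]` in lowest terms. -/
def continuant : List ℕ → ℕ
  | [] => 1
  | [a] => a
  | a :: b :: M => a * continuant (b :: M) + continuant M

lemma continuant_pos : ∀ {L : List ℕ}, (∀ a ∈ L, 1 ≤ a) → 0 < continuant L
  | [], _ => one_pos
  | [a], h => h a (List.mem_singleton_self a)
  | a :: b :: M, h => by
    have := continuant_pos (L := b :: M) fun x hx => h x (List.mem_cons_of_mem a hx)
    have := h a List.mem_cons_self
    simp only [continuant]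
    positivity

lemma coprime_continuant_tail : ∀ L : List ℕ, (continuant L.tail).Coprime (continuant L)
  | [] => Nat.coprime_one_left 1
  | [a] => Nat.coprime_one_left a
  | a :: b :: M => by
    have ih : (continuant (b :: M)).Coprime (continuant M) :=
      (coprime_continuant_tail (b :: M)).symm
    simpa only [continuant, List.tail, add_comm, Nat.coprime_add_mul_right_right] using ih

lemma contFrac_eq_continuant_div : ∀ {L : List ℕ}, L ≠ [] → (∀ a ∈ L, 1 ≤ a) →
    contFrac L = continuant L.tail / continuant L
  | [a], _, _ => by simp [contFrac, continuant]
  | a :: b :: M, _, h => by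
    have hbM : ∀ x ∈ b :: M, 1 ≤ x := fun x hx => h x (List.mem_cons_of_mem a hx)
    have hpos : (0 : ℚ) < continuant (b :: M) := by exact_mod_cast continuant_pos hbM
    rw [contFrac, contFrac_eq_continuant_div (List.cons_ne_nil b M) hbM]
    simp only [continuant, List.tail]
    push_cast
    field_simp

lemma eq_continuant_of_contFrac_eq {L : List ℕ} {p q : ℕ} (hL : L ≠ []) (hL1 : ∀ a ∈ L, 1 ≤ a)
    (hq : 0 < q) (hpq : p.Coprime q) (h : contFrac L = p / q) : q = continuant L := by
  rw [contFrac_eq_continuant_div hL hL1] at h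
  have h' : ((p : ℤ) : ℚ) / (q : ℤ) = ((continuant L.tail : ℤ) : ℚ) / (continuant L : ℤ) := by
    push_cast
    exact h.symm
  have := Rat.div_int_inj (a := p) (b := q) (c := continuant L.tail) (d := continuant L)
    (by exact_mod_cast hq) (by exact_mod_cast continuant_pos hL1) hpq
    (coprime_continuant_tail L) h'
  exact_mod_cast this.2

lemma Set.Subsingleton.exists_option {X : Type*} {s : Set X} (hs : s.Subsingleton) :
    ∃ o : Option X, ∀ x, x ∈ s ↔ o = some x := by
  obtain rfl | ⟨y, rfl⟩ := hs.eq_empty_or_singleton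
  exacts [⟨none, by simp⟩, ⟨some y, by simp [eq_comm]⟩]

lemma card_subsingleton_sets_eq_card_option (X : Type*) :
    Nat.card {s : Set X // s.Subsingleton} = Nat.card (Option X) := by
  let f (o : Option X) : {s : Set X // s.Subsingleton} :=
    ⟨{x | o = some x}, fun x hx y hy => Option.some_injective _ (hx.symm.trans hy)⟩
  refine (Nat.card_congr (Equiv.ofBijective f ⟨fun o o' h => ?_, fun s => ?_⟩)).symm
  · exact Option.ext fun x => Set.ext_iff.1 (congrArg Subtype.val h) x
  · obtain ⟨o, ho⟩ := s.2.exists_option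
    exact ⟨o, Subtype.ext (Set.ext fun x => (ho x).symm)⟩

open SimpleGraph Sum

variable {V W : Type*}

lemma numIndep_eq_card_isIndepSet (G : SimpleGraph V) :
    numIndep G = Nat.card {s : Set V // G.IsIndepSet s} :=
  Nat.card_congr <| Equiv.subtypeEquivRight fun _ =>
    ⟨fun h _ hx _ hy _ => h _ hx _ hy, fun h x hx y hy hxy => by
      obtain rfl | hne := eq_or_ne x y
      exacts [G.irrefl hxy, h hx hy hne hxy]⟩

lemma numIndep_congr {G : SimpleGraph V} {H : SimpleGraph W} (e : G ≃g H) :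
    numIndep G = numIndep H := by
  rw [numIndep_eq_card_isIndepSet, numIndep_eq_card_isIndepSet]
  refine Nat.card_congr (Equiv.subtypeEquiv (Equiv.Set.congr e.toEquiv) fun s => ?_)
  change _ ↔ (e '' s).Pairwise _
  rw [e.injective.injOn.pairwise_image]
  simp only [Set.Pairwise, Function.onFun, e.map_adj_iff]

lemma numIndep_eq_one_of_isEmpty [IsEmpty V] (G : SimpleGraph V) : numIndep G = 1 := by
  rw [numIndep_eq_card_isIndepSet, Nat.card_eq_one_iff_exists]
  exact ⟨⟨∅, Set.pairwise_empty _⟩, fun s => Subtype.ext s.1.eq_empty_of_isEmpty⟩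

lemma numIndep_top (X : Type*) [Finite X] : numIndep (⊤ : SimpleGraph X) = Nat.card X + 1 := by
  rw [numIndep_eq_card_isIndepSet, ← Finite.card_option,
    ← card_subsingleton_sets_eq_card_option]
  refine Nat.card_congr (Equiv.subtypeEquivRight fun s => ?_)
  rw [← isClique_compl, compl_top, isClique_bot_iff]

noncomputable def numIndepDisjoint (G : SimpleGraph V) (P : Set V) : ℕ :=
  Nat.card {s : Set V // G.IsIndepSet s ∧ Disjoint s P}

lemma numIndepDisjoint_univ (G : SimpleGraph V) : numIndepDisjoint G Set.univ = 1 := by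
  rw [numIndepDisjoint, Nat.card_eq_one_iff_exists]
  exact ⟨⟨∅, Set.pairwise_empty _, Set.empty_disjoint _⟩,
    fun s => Subtype.ext (Set.disjoint_univ.1 s.2.2)⟩

lemma two_mul_card_edgeSet_top (X : Type*) [Finite X] :
    2 * Nat.card (⊤ : SimpleGraph X).edgeSet = Nat.card X * (Nat.card X - 1) := by
  classical
  have := Fintype.ofFinite X
  rw [Nat.card_eq_fintype_card, ← edgeFinset_card, card_edgeFinset_top_eq_card_choose_two,
    Nat.choose_two_right, Nat.card_eq_fintype_card,
    Nat.mul_div_cancel' (Nat.even_mul_pred_self _).two_dvd]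

lemma two_mul_card_edgeSet_top_add_le {X : Type*} [Finite X] {A : ℕ} (hX : Nat.card X ≤ A) :
    2 * Nat.card (⊤ : SimpleGraph X).edgeSet + 2 * Nat.card X ≤ (A + 1) * Nat.card X := by
  rw [two_mul_card_edgeSet_top]
  generalize Nat.card X = m at hX ⊢
  obtain _ | m := m
  · simp
  · rw [Nat.add_sub_cancel]
    nlinarith

def attachClique (W : Type*) (G : SimpleGraph V) (P : Set V) : SimpleGraph (Option W ⊕ V) where
  Adj
    | inl c, inl d => c ≠ d
    | inl c, inr v | inr v, inl c => c = none ∧ v ∈ P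
    | inr u, inr v => G.Adj u v
  symm := ⟨by
    rintro (c | u) (d | v) h
    exacts [Ne.symm h, h, h, h.symm]⟩
  loopless := ⟨by
    rintro (c | u) h
    exacts [h rfl, G.irrefl h]⟩

section attachClique

variable {G : SimpleGraph V} {P : Set V}

lemma isIndepSet_attachClique_iff {s : Set (Option W ⊕ V)} :
    (attachClique W G P).IsIndepSet s ↔ (inl ⁻¹' s).Subsingleton ∧ G.IsIndepSet (inr ⁻¹' s) ∧
      (inl none ∈ s → Disjoint (inr ⁻¹' s) P) := by
  refine ⟨fun hs => ⟨fun c hc d hd => ?_, fun u hu v hv huv => ?_, fun hn => ?_⟩, ?_⟩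
  · by_contra hcd
    exact hs hc hd (by simpa using hcd) hcd
  · exact hs hu hv (inr_injective.ne huv)
  · exact Set.disjoint_left.2 fun v hv hvP => hs hn hv (by simp) ⟨rfl, hvP⟩
  · rintro ⟨hl, hr, hn⟩ (c | u) hx (d | v) hy hne
    · exact fun hcd => hcd (hl hx hy)
    · rintro ⟨rfl, hvP⟩
      exact Set.disjoint_left.1 (hn hx) hy hvP
    · rintro ⟨rfl, huP⟩
      exact Set.disjoint_left.1 (hn hy) hx huP
    · exact hr hx hy fun huv => hne (congrArg inr huv)

lemma numIndep_attachClique [Finite V] [Finite W] :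
    numIndep (attachClique W G P) = (Nat.card W + 1) * numIndep G + numIndepDisjoint G P := by
  have := Fintype.ofFinite W
  -- An independent set is at most one clique vertex `o` together with an independent set of
  -- `G`, which has to avoid `P` when `o` is the vertex `none` joined to `P`.
  let D := {x : Option (Option W) × Set V //
    G.IsIndepSet x.2 ∧ (x.1 = some none → Disjoint x.2 P)}
  let f (x : D) : {s // (attachClique W G P).IsIndepSet s} :=
    ⟨inl '' {c | x.1.1 = some c} ∪ inr '' x.1.2, isIndepSet_attachClique_iff.2 <| by
      simpa [Set.preimage_image_eq _ inl_injective, Set.preimage_image_eq _ inr_injective] using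
        ⟨fun c hc d hd => Option.some_injective _ (hc.symm.trans hd), x.2⟩⟩
  have hf : Function.Bijective f := by
    refine ⟨fun x y h => ?_, fun ⟨s, hs⟩ => ?_⟩
    · have h := Set.ext_iff.1 (congrArg Subtype.val h)
      refine Subtype.ext (Prod.ext (Option.ext fun c => ?_) (Set.ext fun v => ?_))
      · simpa [f] using h (inl c)
      · simpa [f] using h (inr v)
    · obtain ⟨hl, hr, hn⟩ := isIndepSet_attachClique_iff.1 hs
      obtain ⟨o, ho⟩ := hl.exists_option
      refine ⟨⟨(o, inr ⁻¹' s), hr, fun h => hn ((ho none).2 h)⟩, Subtype.ext (Set.ext ?_)⟩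
      rintro (c | v)
      · simpa [f] using (ho c).symm
      · simp [f]
  rw [numIndep_eq_card_isIndepSet, ← Nat.card_congr (Equiv.ofBijective f hf),
    Nat.card_congr (Equiv.subtypeProdEquivSigmaSubtype fun o u =>
      G.IsIndepSet u ∧ (o = some none → Disjoint u P)), Nat.card_sigma,
    Fintype.sum_option, Fintype.sum_option]
  simp [numIndep_eq_card_isIndepSet, numIndepDisjoint, Nat.card_eq_fintype_card]
  ring

lemma numIndepDisjoint_attachClique :
    numIndepDisjoint (attachClique W G P) (Set.range inl) = numIndep G := by
  rw [numIndep_eq_card_isIndepSet, numIndepDisjoint]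
  let g (u : {u // G.IsIndepSet u}) :
      {s // (attachClique W G P).IsIndepSet s ∧ Disjoint s (Set.range inl)} :=
    ⟨inr '' u.1,
      isIndepSet_attachClique_iff.2 (by simpa [Set.preimage_image_eq _ inr_injective] using u.2),
      Set.isCompl_range_inl_range_inr.disjoint.symm.mono_left (Set.image_subset_range _ _)⟩
  refine (Nat.card_congr (Equiv.ofBijective g ⟨fun u u' h => ?_, fun ⟨s, hs, hd⟩ => ?_⟩)).symm
  · exact Subtype.ext (Set.image_injective.2 inr_injective (congrArg Subtype.val h))
  · refine ⟨⟨inr ⁻¹' s, (isIndepSet_attachClique_iff.1 hs).2.1⟩, Subtype.ext (Set.ext ?_)⟩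
    rintro (c | v)
    · simpa [g] using Set.disjoint_right.1 hd (Set.mem_range_self c)
    · simp [g]

lemma attachClique_preconnected (hP : ∀ v, ∃ p ∈ P, G.Reachable v p) :
    (attachClique W G P).Preconnected := by
  have key : ∀ x, (attachClique W G P).Reachable x (inl none) := by
    rintro (c | v)
    · obtain rfl | hc := eq_or_ne c none
      exacts [.rfl, Adj.reachable (G := attachClique W G P) hc]
    · obtain ⟨p, hp, hvp⟩ := hP v
      exact (hvp.map ⟨inr, id⟩).trans (Adj.reachable (G := attachClique W G P) ⟨rfl, hp⟩)
  exact fun x y => (key x).trans (key y).symm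

lemma card_edgeSet_attachClique_le [Finite V] [Finite W] :
    Nat.card (attachClique W G P).edgeSet ≤
      Nat.card (⊤ : SimpleGraph (Option W)).edgeSet + (Nat.card P + Nat.card G.edgeSet) := by
  let f : (⊤ : SimpleGraph (Option W)).edgeSet ⊕ P ⊕ G.edgeSet → (attachClique W G P).edgeSet :=
    Sum.elim (Hom.mapEdgeSet ⟨inl, id⟩)
      (Sum.elim (fun v => ⟨s(inl none, inr v.1), rfl, v.2⟩) (Hom.mapEdgeSet ⟨inr, id⟩))
  have hf : Function.Surjective f := by
    rintro ⟨e, he⟩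
    induction e using Sym2.ind with
    | _ x y =>
      rcases x with c | u <;> rcases y with d | v
      · exact ⟨inl ⟨s(c, d), he⟩, rfl⟩
      · obtain ⟨rfl, hv⟩ := he
        exact ⟨inr (inl ⟨v, hv⟩), rfl⟩
      · obtain ⟨rfl, hu⟩ := he
        exact ⟨inr (inl ⟨u, hu⟩), Subtype.ext Sym2.eq_swap⟩
      · exact ⟨inr (inr ⟨s(u, v), he⟩), rfl⟩
  simpa only [Nat.card_sum] using Nat.card_le_card_of_surjective f hf

lemma two_mul_card_edgeSet_attachClique_add_le [Finite V] [Finite W] {A : ℕ}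
    (hW : Nat.card W + 1 ≤ A)
    (hG : 2 * Nat.card G.edgeSet + 2 * Nat.card P ≤ (A + 1) * Nat.card V) :
    2 * Nat.card (attachClique W G P).edgeSet +
        2 * Nat.card (Set.range (inl : Option W → Option W ⊕ V)) ≤
      (A + 1) * Nat.card (Option W ⊕ V) := by
  have hclique := two_mul_card_edgeSet_top_add_le (X := Option W) (A := A)
    (by rwa [Finite.card_option])
  have hedge := card_edgeSet_attachClique_le (W := W) (G := G) (P := P)
  rw [Nat.card_range_of_injective inl_injective, Nat.card_sum]
  nlinarith

end attachClique

lemma exists_graph_numIndep_eq_continuant {A : ℕ} : ∀ {L : List ℕ}, L ≠ [] →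
    (∀ a ∈ L, 1 ≤ a ∧ a ≤ A) →
    ∃ (V : Type) (_ : Finite V) (G : SimpleGraph V) (P : Set V),
      G.Preconnected ∧ (∀ v, ∃ p ∈ P, G.Reachable v p) ∧
      numIndep G = continuant L ∧ numIndepDisjoint G P = continuant L.tail ∧
      2 * Nat.card G.edgeSet + 2 * Nat.card P ≤ (A + 1) * Nat.card V
  | [a], _, h => by
    obtain ⟨ha1, haA⟩ := h a (List.mem_singleton_self a)
    refine ⟨Fin (a - 1), inferInstance, ⊤, Set.univ, preconnected_top,
      fun v => ⟨v, trivial, .rfl⟩, ?_, numIndepDisjoint_univ _, ?_⟩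
    · rw [numIndep_top, Nat.card_eq_fintype_card, Fintype.card_fin, Nat.sub_add_cancel ha1]
      rfl
    · rw [Nat.card_univ]
      exact two_mul_card_edgeSet_top_add_le (by simp; omega)
  | a :: b :: M, _, h => by
    obtain ⟨ha1, haA⟩ := h a List.mem_cons_self
    obtain ⟨V, _, G, P, -, hP, hnum, hdisj, hedge⟩ := exists_graph_numIndep_eq_continuant
      (List.cons_ne_nil b M) fun x hx => h x (List.mem_cons_of_mem a hx)
    have hconn := attachClique_preconnected (W := Fin (a - 1)) hP
    refine ⟨_, inferInstance, attachClique (Fin (a - 1)) G P, Set.range inl, hconn,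
      fun x => ⟨inl none, Set.mem_range_self _, hconn x _⟩, ?_, ?_,
      two_mul_card_edgeSet_attachClique_add_le (by simp; omega) hedge⟩
    · rw [numIndep_attachClique, hnum, hdisj, Nat.card_eq_fintype_card, Fintype.card_fin,
        Nat.sub_add_cancel ha1]
      rfl
    · rw [numIndepDisjoint_attachClique, hnum]
      rfl

theorem exists_connected_graph_of_mem_QSet_general (A : ℕ) (q : ℕ)
    (hq : 2 ≤ q) (hQ : q ∈ QSet A) :
    ∃ (n : ℕ) (G : SimpleGraph (Fin n)), G.Connected ∧ numIndep G = q ∧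
      2 * Nat.card G.edgeSet ≤ (A + 1) * n := by
  obtain rfl | ⟨p, -, -, hcop, L, hL, hLA, hfrac⟩ := hQ
  · omega
  obtain rfl := eq_continuant_of_contFrac_eq hL (fun a ha => (hLA a ha).1) (by omega) hcop hfrac
  obtain ⟨V, _, G, P, hconn, -, hnum, -, hedge⟩ := exists_graph_numIndep_eq_continuant hL hLA
  have : Nonempty V := by
    by_contra h
    have := not_nonempty_iff.1 h
    have := numIndep_eq_one_of_isEmpty G
    omega
  have := Fintype.ofFinite V
  let e := G.overFinIso rfl
  refine ⟨_, _, e.connected_iff.1 ⟨hconn⟩, by rw [← numIndep_congr e, hnum], ?_⟩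
  rw [← Nat.card_congr e.mapEdgeSet, ← Nat.card_eq_fintype_card]
  omega

/-- If `A ≥ 1` and `q ∈ Q_A` with `q ≥ 2`, then there is a finite connected
simple graph `G` with `i(G) = q` and `2|E(G)| ≤ (A+1)|V(G)|`, i.e. with
average degree at most `A + 1`. -/
theorem exists_connected_graph_of_mem_QSet (A : ℕ) (hA : 0 < A) (q : ℕ)
    (hq : 2 ≤ q) (hQ : q ∈ QSet A) :
    ∃ (n : ℕ) (G : SimpleGraph (Fin n)), G.Connected ∧ numIndep G = q ∧
      2 * Nat.card G.edgeSet ≤ (A + 1) * n :=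
  exists_connected_graph_of_mem_QSet_general A q hq hQ
end
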